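/- arXiv:2204.04248 — 2 statements merged into one kernel-verified Lean document; each statement's English description precedes it below -/
import Mathlib

section
/- Let H be a real Hilbert space and φ : H → ℝ a convex, continuous, positively 1-homogeneous function with φ(0) = 0. Identify H* with H. Then for every ς ∈ H: dist(ς, ∂φ(0)) = sup over η ∈ H with ‖η‖ ≤ 1 of (⟨ς, η⟩ − φ(η)), where dist denotes the norm distance from ς to the closed convex set ∂φ(0) = {σ ∈ H : ⟨σ, η⟩ ≤ φ(η) for all η}. -/
open scoped RealInnerProductSpace

/-!
Each `σ ∈ ∂φ(0)` gives `⟪ς, η⟫ - φ η ≤ ⟪ς - σ, η⟫ ≤ ‖ς - σ‖` on the unit ball, so the supremum is at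
most the distance. Conversely, let `σ₀` be the projection of `ς` onto the closed convex set `∂φ(0)`
and `v = ς - σ₀`. Hahn–Banach, with the sublinear `φ` as dominating function, gives `σ ∈ ∂φ(0)` with
`⟪σ, v⟫ = φ v`; the variational inequality `⟪v, σ - σ₀⟫ ≤ 0` then yields `φ v ≤ ⟪σ₀, v⟫`, i.e.
`⟪ς, v⟫ - φ v ≥ ‖v‖²`, so `η = v / ‖v‖` attains the value `‖v‖ = dist(ς, ∂φ(0))`.
-/

section Sublinear

variable {E : Type*} [AddCommGroup E] [Module ℝ E] {φ : E → ℝ}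

theorem map_zero_of_posHomogeneous (hhom : ∀ c : ℝ, 0 < c → ∀ x : E, φ (c • x) = c * φ x) :
    φ 0 = 0 := by
  have h := hhom 2 two_pos 0
  rw [smul_zero] at h
  linarith

theorem ConvexOn.map_add_le_of_posHomogeneous (hconv : ConvexOn ℝ Set.univ φ)
    (hhom : ∀ c : ℝ, 0 < c → ∀ x : E, φ (c • x) = c * φ x) (x y : E) :
    φ (x + y) ≤ φ x + φ y := by
  have hmid := hconv.2 (Set.mem_univ x) (Set.mem_univ y) (by norm_num : (0 : ℝ) ≤ 1 / 2)
    (by norm_num : (0 : ℝ) ≤ 1 / 2) (by norm_num)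
  simp only [smul_eq_mul] at hmid
  calc φ (x + y) = 2 * φ ((1 / 2 : ℝ) • x + (1 / 2 : ℝ) • y) := by
        rw [← hhom 2 two_pos, smul_add, smul_smul, smul_smul]; norm_num
    _ ≤ φ x + φ y := by linarith

variable (hadd : ∀ x y : E, φ (x + y) ≤ φ x + φ y)
  (hhom : ∀ c : ℝ, 0 < c → ∀ x : E, φ (c • x) = c * φ x)
include hadd hhom

theorem mul_le_map_smul_of_sublinear (c : ℝ) (v : E) : c * φ v ≤ φ (c • v) := by
  have hφ0 := map_zero_of_posHomogeneous hhom
  rcases lt_trichotomy c 0 with hc | rfl | hc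
  · have h := hadd (c • v) ((-c) • v)
    rw [← add_smul, add_neg_cancel, zero_smul, hφ0, hhom (-c) (neg_pos.2 hc)] at h
    linarith
  · simp [hφ0]
  · exact (hhom c hc v).ge

theorem exists_linearMap_le_eq_of_sublinear (v : E) :
    ∃ g : E →ₗ[ℝ] ℝ, (∀ x, g x ≤ φ x) ∧ g v = φ v := by
  have hker : ∀ c : ℝ, c • v = 0 → c • φ v = 0 := by
    intro c hc
    rcases smul_eq_zero.mp hc with rfl | rfl
    · exact zero_smul ℝ _
    · rw [map_zero_of_posHomogeneous hhom, smul_zero]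
  let f := LinearPMap.mkSpanSingleton' (σ := RingHom.id ℝ) v (φ v) hker
  have hv : v ∈ f.domain := Submodule.mem_span_singleton_self v
  have hf : ∀ x : f.domain, f x ≤ φ x := by
    rintro ⟨x, hx⟩
    obtain ⟨c, rfl⟩ := Submodule.mem_span_singleton.mp hx
    rw [LinearPMap.mkSpanSingleton'_apply v (φ v) hker c hx]
    exact mul_le_map_smul_of_sublinear hadd hhom c v
  obtain ⟨g, hgf, hgφ⟩ := exists_extension_of_le_sublinear f φ hhom hadd hf
  refine ⟨g, hgφ, ?_⟩
  rw [← LinearPMap.mkSpanSingleton'_apply_self v (φ v) hker hv]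
  exact hgf ⟨v, hv⟩

end Sublinear

theorem LinearMap.continuous_of_le {E : Type*} [AddCommGroup E] [Module ℝ E] [TopologicalSpace E]
    [IsTopologicalAddGroup E] (g : E →ₗ[ℝ] ℝ) {φ : E → ℝ} (hφ : ContinuousAt φ 0) (hφ0 : φ 0 = 0)
    (hg : ∀ x, g x ≤ φ x) : Continuous g := by
  refine continuous_of_continuousAt_zero g ?_
  have hupper : Filter.Tendsto φ (nhds 0) (nhds 0) := hφ0 ▸ hφ
  have hlower : Filter.Tendsto (fun x => -φ (-x)) (nhds (0 : E)) (nhds 0) := by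
    have hneg : Filter.Tendsto (fun x : E => -x) (nhds 0) (nhds 0) := by
      simpa using continuous_neg.tendsto (0 : E)
    simpa using (hupper.comp hneg).neg
  rw [ContinuousAt, map_zero]
  refine tendsto_of_tendsto_of_tendsto_of_le_of_le hlower hupper (fun x => ?_) hg
  have h := hg (-x)
  rw [map_neg] at h
  exact neg_le.mp h

section StableSet

variable {H : Type*} [NormedAddCommGroup H] [InnerProductSpace ℝ H]

/-- The set `∂φ(0)`: for positively homogeneous convex `φ`, the subdifferential at `0`. -/
def stableSet (φ : H → ℝ) : Set H := {σ | ∀ η, ⟪σ, η⟫ ≤ φ η}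

theorem stableSet_eq_iInter (φ : H → ℝ) : stableSet φ = ⋂ η, {σ : H | ⟪σ, η⟫ ≤ φ η} := by
  ext σ; simp [stableSet]

theorem convex_stableSet (φ : H → ℝ) : Convex ℝ (stableSet φ) := by
  rw [stableSet_eq_iInter]
  exact convex_iInter fun η =>
    convex_halfSpace_le ⟨fun x y => inner_add_left x y η, fun c x => real_inner_smul_left x η c⟩ _

theorem isClosed_stableSet (φ : H → ℝ) : IsClosed (stableSet φ) := by
  rw [stableSet_eq_iInter]
  exact isClosed_iInter fun η => isClosed_le (continuous_id.inner continuous_const) continuous_const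

theorem inner_sub_le_norm_sub_of_mem_stableSet {φ : H → ℝ} {σ : H} (hσ : σ ∈ stableSet φ)
    (ς : H) {η : H} (hη : ‖η‖ ≤ 1) : ⟪ς, η⟫ - φ η ≤ ‖ς - σ‖ :=
  calc ⟪ς, η⟫ - φ η ≤ ⟪ς, η⟫ - ⟪σ, η⟫ := by linarith [hσ η]
    _ = ⟪ς - σ, η⟫ := (inner_sub_left ς σ η).symm
    _ ≤ ‖ς - σ‖ * ‖η‖ := real_inner_le_norm _ _
    _ ≤ ‖ς - σ‖ := mul_le_of_le_one_right (norm_nonneg _) hη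

theorem exists_norm_le_one_le_inner_sub {φ : H → ℝ}
    (hhom : ∀ c : ℝ, 0 < c → ∀ x : H, φ (c • x) = c * φ x) {ς v : H}
    (hv : ‖v‖ ^ 2 ≤ ⟪ς, v⟫ - φ v) : ∃ η : H, ‖η‖ ≤ 1 ∧ ‖v‖ ≤ ⟪ς, η⟫ - φ η := by
  rcases eq_or_ne v 0 with rfl | hv0
  · exact ⟨0, by simp [map_zero_of_posHomogeneous hhom]⟩
  have hpos : 0 < ‖v‖ := norm_pos_iff.mpr hv0
  refine ⟨‖v‖⁻¹ • v, (norm_smul_inv_norm hv0).le, ?_⟩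
  rw [real_inner_smul_right, hhom _ (inv_pos.2 hpos), ← mul_sub]
  calc ‖v‖ = ‖v‖⁻¹ * ‖v‖ ^ 2 := by field_simp
    _ ≤ ‖v‖⁻¹ * (⟪ς, v⟫ - φ v) := by gcongr

variable [CompleteSpace H] {φ : H → ℝ} (hadd : ∀ x y : H, φ (x + y) ≤ φ x + φ y)
  (hhom : ∀ c : ℝ, 0 < c → ∀ x : H, φ (c • x) = c * φ x) (hcont : ContinuousAt φ 0)
include hadd hhom hcont

theorem exists_mem_stableSet_inner_eq (v : H) : ∃ σ ∈ stableSet φ, ⟪σ, v⟫ = φ v := by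
  obtain ⟨g, hgφ, hgv⟩ := exists_linearMap_le_eq_of_sublinear hadd hhom v
  let G : H →L[ℝ] ℝ := ⟨g, g.continuous_of_le hcont (map_zero_of_posHomogeneous hhom) hgφ⟩
  refine ⟨(InnerProductSpace.toDual ℝ H).symm G, fun η => ?_, ?_⟩
  · rw [InnerProductSpace.toDual_symm_apply]; exact hgφ η
  · rw [InnerProductSpace.toDual_symm_apply]; exact hgv

theorem stableSet_nonempty : (stableSet φ).Nonempty :=
  let ⟨σ, hσ, _⟩ := exists_mem_stableSet_inner_eq hadd hhom hcont 0
  ⟨σ, hσ⟩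

theorem sq_norm_sub_le_inner_sub_of_proj {ς σ₀ : H}
    (hproj : ∀ w ∈ stableSet φ, ⟪ς - σ₀, w - σ₀⟫ ≤ 0) :
    ‖ς - σ₀‖ ^ 2 ≤ ⟪ς, ς - σ₀⟫ - φ (ς - σ₀) := by
  obtain ⟨σ, hσ, hσv⟩ := exists_mem_stableSet_inner_eq hadd hhom hcont (ς - σ₀)
  have hsupp : φ (ς - σ₀) ≤ ⟪σ₀, ς - σ₀⟫ := by
    have h := hproj σ hσ
    rw [inner_sub_right, real_inner_comm σ, real_inner_comm σ₀, hσv] at h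
    linarith
  calc ‖ς - σ₀‖ ^ 2 = ⟪ς, ς - σ₀⟫ - ⟪σ₀, ς - σ₀⟫ := by
        rw [← inner_sub_left, real_inner_self_eq_norm_sq]
    _ ≤ ⟪ς, ς - σ₀⟫ - φ (ς - σ₀) := by linarith

end StableSet

theorem dist_to_stable_set_eq_sup_general
    {H : Type*} [NormedAddCommGroup H] [InnerProductSpace ℝ H] [CompleteSpace H]
    (φ : H → ℝ)
    (hconv : ConvexOn ℝ Set.univ φ)
    (hcont : Continuous φ)
    (hhom : ∀ lam : ℝ, 0 < lam → ∀ v : H, φ (lam • v) = lam * φ v)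
    (ς : H) :
    Metric.infDist ς {σ : H | ∀ η : H, ⟪σ, η⟫ ≤ φ η} =
      sSup {r : ℝ | ∃ η : H, ‖η‖ ≤ 1 ∧ r = ⟪ς, η⟫ - φ η} := by
  change Metric.infDist ς (stableSet φ) = _
  have hadd := hconv.map_add_le_of_posHomogeneous hhom
  have hne := stableSet_nonempty hadd hhom hcont.continuousAt
  obtain ⟨σ₀, hσ₀, hmin⟩ := exists_norm_eq_iInf_of_complete_convex hne
    (isClosed_stableSet φ).isComplete (convex_stableSet φ) ς
  have hproj := (norm_eq_iInf_iff_real_inner_le_zero (convex_stableSet φ) hσ₀).mp hmin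
  obtain ⟨η, hη, hattain⟩ := exists_norm_le_one_le_inner_sub hhom
    (sq_norm_sub_le_inner_sub_of_proj hadd hhom hcont.continuousAt hproj)
  set S := {r : ℝ | ∃ η : H, ‖η‖ ≤ 1 ∧ r = ⟪ς, η⟫ - φ η}
  have hupper : ∀ r ∈ S, r ≤ Metric.infDist ς (stableSet φ) := by
    rintro r ⟨η, hη, rfl⟩
    refine (Metric.le_infDist hne).2 fun σ hσ => ?_
    rw [dist_eq_norm]
    exact inner_sub_le_norm_sub_of_mem_stableSet hσ ς hη
  have hmem : Metric.infDist ς (stableSet φ) ∈ S := by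
    refine ⟨η, hη, le_antisymm ?_ (hupper _ ⟨η, hη, rfl⟩)⟩
    calc Metric.infDist ς (stableSet φ) ≤ dist ς σ₀ := Metric.infDist_le_dist_of_mem hσ₀
      _ = ‖ς - σ₀‖ := dist_eq_norm ς σ₀
      _ ≤ ⟪ς, η⟫ - φ η := hattain
  exact (IsGreatest.csSup_eq ⟨hmem, hupper⟩).symm

/-- Duality formula: the distance of `ς` to the stable set `∂φ(0)` equals the sup over
the unit ball of `⟨ς,η⟩ - φ(η)`, for a convex continuous positively 1-homogeneous `φ`. -/
theorem dist_to_stable_set_eq_sup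
    {H : Type*} [NormedAddCommGroup H] [InnerProductSpace ℝ H] [CompleteSpace H]
    (φ : H → ℝ)
    (hφ0 : φ 0 = 0)
    (hconv : ConvexOn ℝ Set.univ φ)
    (hcont : Continuous φ)
    (hhom : ∀ lam : ℝ, 0 < lam → ∀ v : H, φ (lam • v) = lam * φ v)
    (ς : H) :
    Metric.infDist ς {σ : H | ∀ η : H, ⟪σ, η⟫ ≤ φ η} =
      sSup {r : ℝ | ∃ η : H, ‖η‖ ≤ 1 ∧ r = ⟪ς, η⟫ - φ η} :=
  dist_to_stable_set_eq_sup_general φ hconv hcont hhom ς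
end

section
/- Let X be a real Hilbert space, Ψ : X → ℝ convex, continuous and positively 1-homogeneous with Ψ(0) = 0, identify X* with X, and let C = ∂Ψ(0) (a nonempty closed convex set). Let ξ, v ∈ X and let ω be the metric projection of ξ onto C, so that ‖ξ − ω‖ = dist(ξ, C). If ⟨ξ, v⟩ = Ψ(v) + ‖v‖ · dist(ξ, C), then ⟨ω, v⟩ = Ψ(v) and ⟨ξ − ω, v⟩ = ‖ξ − ω‖ · ‖v‖; consequently, if v ≠ 0 there exists λ ≥ 0 such that ξ = ω + λ v, ω ∈ ∂Ψ(v), and λ‖v‖ = dist(ξ, C). -/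
open scoped RealInnerProductSpace

/-- Abstract form of the viscous-jump argument (Proposition 3.10, Case 2):
if `⟨ξ,v⟩ = Ψ(v) + ‖v‖·dist(ξ, ∂Ψ(0))`, then the projection `ω` of `ξ` onto
`∂Ψ(0)` realizes `Ψ(v)` and `ξ − ω` is aligned with `v`. -/
theorem viscous_jump_decomposition
    {X : Type*} [NormedAddCommGroup X] [InnerProductSpace ℝ X] [CompleteSpace X]
    (Ψ : X → ℝ)
    (hΨ0 : Ψ 0 = 0)
    (hconv : ConvexOn ℝ Set.univ Ψ)
    (hcont : Continuous Ψ)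
    (hhom : ∀ lam : ℝ, 0 < lam → ∀ v : X, Ψ (lam • v) = lam * Ψ v)
    (ξ v ω : X)
    (hωC : ω ∈ {σ : X | ∀ w : X, ⟪σ, w⟫ ≤ Ψ w})
    (hproj : ‖ξ - ω‖ = Metric.infDist ξ {σ : X | ∀ w : X, ⟪σ, w⟫ ≤ Ψ w})
    (heq : ⟪ξ, v⟫ = Ψ v + ‖v‖ * Metric.infDist ξ {σ : X | ∀ w : X, ⟪σ, w⟫ ≤ Ψ w}) :
    ⟪ω, v⟫ = Ψ v ∧ ⟪ξ - ω, v⟫ = ‖ξ - ω‖ * ‖v‖ ∧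
      (v ≠ 0 → ∃ lam : ℝ, 0 ≤ lam ∧ ξ = ω + lam • v ∧
        (∀ w : X, Ψ v + ⟪ω, w - v⟫ ≤ Ψ w) ∧
        lam * ‖v‖ = Metric.infDist ξ {σ : X | ∀ w : X, ⟪σ, w⟫ ≤ Ψ w}) := by
  have hsplit : ⟪ξ - ω, v⟫ + ⟪ω, v⟫ = ⟪ξ, v⟫ := by
    rw [← inner_add_left, sub_add_cancel]
  have hA : ⟪ω, v⟫ ≤ Ψ v := hωC v
  have hB : ⟪ξ - ω, v⟫ ≤ ‖ξ - ω‖ * ‖v‖ := real_inner_le_norm _ _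
  have hsum : ⟪ξ - ω, v⟫ + ⟪ω, v⟫ = Ψ v + ‖ξ - ω‖ * ‖v‖ := by
    rw [hsplit, heq, ← hproj]; ring
  have h1 : ⟪ω, v⟫ = Ψ v := by linarith
  have h2 : ⟪ξ - ω, v⟫ = ‖ξ - ω‖ * ‖v‖ := by linarith
  refine ⟨h1, h2, fun hv => ?_⟩
  have hCS : (‖v‖ : ℝ) • (ξ - ω) = ‖ξ - ω‖ • v := by
    exact inner_eq_norm_mul_iff_real.mp h2
  have hv' : (0:ℝ) < ‖v‖ := norm_pos_iff.mpr hv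
  refine ⟨‖ξ - ω‖ / ‖v‖, by positivity, ?_, ?_, ?_⟩
  · have : ξ - ω = (‖ξ - ω‖ / ‖v‖) • v := by
      have h := congrArg (fun z => (‖v‖)⁻¹ • z) hCS
      simp only [smul_smul, inv_mul_cancel₀ hv'.ne', one_smul] at h
      rw [div_eq_inv_mul]; exact h
    rw [← this]; abel
  · intro w
    have := hωC w
    have : ⟪ω, w - v⟫ = ⟪ω, w⟫ - ⟪ω, v⟫ := inner_sub_right _ _ _
    rw [this, h1]
    have := hωC w
    linarith
  · rw [← hproj]; field_simp
end
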